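/- arXiv:math/0402356 — 3 statements merged into one kernel-verified Lean document; each statement's English description precedes it below -/
import Mathlib

section
/- For all real numbers L, R_A, R_B > 0 with p > 1, there exists λ > 0 with cosh(λ/2) = √p such that the eigenvalues of P are exactly e^{λ} and e^{-λ}; equivalently, the characteristic polynomial of P over ℝ equals (X - e^{λ})(X - e^{-λ}). -/
open Polynomial

/-- For `L, R_A, R_B > 0` with `p = (1 - L/R_A)(1 - L/R_B) > 1`, there exists
`λ > 0` with `cosh(λ/2) = √p` such that the eigenvalues of the Poincaré map
`P = M_A * M_B` are exactly `e^{λ}` and `e^{-λ}`: the characteristic polynomial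
of `P` over `ℝ` equals `(X - e^{λ})(X - e^{-λ})`. -/
theorem bouncing_ball_hyperbolic_eigenvalues (L RA RB : ℝ)
    (hL : 0 < L) (hA : 0 < RA) (hB : 0 < RB)
    (hp : 1 < (1 - L/RA) * (1 - L/RB)) :
    let MA : Matrix (Fin 2) (Fin 2) ℝ := !![1, L; -2/RA, 1 - 2*L/RA]
    let MB : Matrix (Fin 2) (Fin 2) ℝ := !![1, L; -2/RB, 1 - 2*L/RB]
    ∃ lam : ℝ, 0 < lam ∧
      Real.cosh (lam / 2) = Real.sqrt ((1 - L/RA) * (1 - L/RB)) ∧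
      (MA * MB).charpoly =
        (X - C (Real.exp lam)) * (X - C (Real.exp (-lam))) := by
  intro MA MB
  set p := (1 - L/RA) * (1 - L/RB) with hpdef
  have hp0 : 0 < p := lt_trans one_pos hp
  set s := Real.sqrt p with hsdef
  set t := Real.sqrt (p - 1) with htdef
  have hs2 : s ^ 2 = p := Real.sq_sqrt hp0.le
  have ht2 : t ^ 2 = p - 1 := Real.sq_sqrt (by linarith)
  have hs1 : 1 < s := by
    nlinarith [Real.sqrt_nonneg p, hs2]
  have ht0 : 0 < t := Real.sqrt_pos.2 (by linarith)
  have hxpos : (0:ℝ) < s + t := by linarith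
  have hmul : (s + t) * (s - t) = 1 := by nlinarith
  have hinv : (s + t)⁻¹ = s - t := inv_eq_of_mul_eq_one_right hmul
  refine ⟨2 * Real.log (s + t), ?_, ?_, ?_⟩
  · have : 0 < Real.log (s + t) := Real.log_pos (by linarith)
    linarith
  · have h2 : 2 * Real.log (s + t) / 2 = Real.log (s + t) := by ring
    rw [h2, Real.cosh_eq, Real.exp_log hxpos, Real.exp_neg, Real.exp_log hxpos,
      hinv]
    ring
  · have he1 : Real.exp (2 * Real.log (s + t)) = (s + t) ^ 2 := by
      rw [show 2 * Real.log (s + t) = Real.log (s + t) + Real.log (s + t) by ring,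
        Real.exp_add, Real.exp_log hxpos]; ring
    have he2 : Real.exp (-(2 * Real.log (s + t))) = (s - t) ^ 2 := by
      rw [Real.exp_neg, he1, ← hinv, inv_pow]
    have htr : (MA * MB).trace = 4 * p - 2 := by
      show (!![1, L; -2/RA, 1 - 2*L/RA] * !![1, L; -2/RB, 1 - 2*L/RB]).trace = _
      rw [Matrix.mul_fin_two, Matrix.trace_fin_two_of, hpdef]
      field_simp
      ring
    have hdet : (MA * MB).det = 1 := by
      show (!![1, L; -2/RA, 1 - 2*L/RA] * !![1, L; -2/RB, 1 - 2*L/RB]).det = _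
      rw [Matrix.det_mul, Matrix.det_fin_two_of, Matrix.det_fin_two_of]
      field_simp
      ring
    have hcp : (MA * MB).charpoly =
        X ^ 2 - C ((MA * MB).trace) * X + C ((MA * MB).det) := by
      rw [Matrix.charpoly, Matrix.det_fin_two, Matrix.charmatrix_apply_eq,
        Matrix.charmatrix_apply_eq, Matrix.charmatrix_apply_ne _ _ _ (by decide),
        Matrix.charmatrix_apply_ne _ _ _ (by decide), Matrix.trace_fin_two,
        Matrix.det_fin_two]
      simp only [map_sub, map_add, map_mul]
      ring
    rw [hcp, htr, hdet, he1, he2]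
    have hsum : (s + t) ^ 2 + (s - t) ^ 2 = 4 * p - 2 := by nlinarith
    have hprod : (s + t) ^ 2 * (s - t) ^ 2 = 1 := by nlinarith
    rw [← hsum, ← hprod]
    simp only [map_add, map_mul]
    ring
end

section
/- For all real numbers L, R_A, R_B > 0 the following dichotomy holds for P = M_A * M_B: (i) P has two non-real complex eigenvalues (necessarily of modulus one, i.e. the bouncing ball orbit is elliptic) if and only if L < min{R_A, R_B}, or max{R_A, R_B} < L < R_A + R_B; (ii) P has a real eigenvalue of absolute value different from 1 (i.e. the orbit is hyperbolic) if and only if L > R_A + R_B, or min{R_A, R_B} < L < max{R_A, R_B}. -/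
open Polynomial

private lemma charpoly_fin_two' {R : Type*} [CommRing R] (a b c d : R) :
    (!![a, b; c, d]).charpoly = X ^ 2 - C (a + d) * X + C (a * d - b * c) := by
  rw [Matrix.charpoly, Matrix.det_fin_two]
  simp [Matrix.charmatrix_apply]
  ring

private lemma sign_iff_aux (L RA RB : ℝ) (hL : 0 < L) (hA : 0 < RA) (hB : 0 < RB)
    (hAB : RA ≤ RB) :
    ((L - RA - RB) * ((RA - L) * (RB - L)) < 0 ↔ (L < RA ∨ (RB < L ∧ L < RA + RB))) ∧
    (0 < (L - RA - RB) * ((RA - L) * (RB - L)) ↔ (RA + RB < L ∨ (RA < L ∧ L < RB))) := by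
  constructor
  · constructor
    · intro h
      by_contra hc
      push_neg at hc
      obtain ⟨h1, h2⟩ := hc
      rcases le_or_gt L RB with h' | h'
      · have hbc : (RA - L) * (RB - L) ≤ 0 :=
          mul_nonpos_of_nonpos_of_nonneg (by linarith) (by linarith)
        have := mul_nonneg (show (0:ℝ) ≤ -(L - RA - RB) by linarith)
          (show (0:ℝ) ≤ -((RA - L) * (RB - L)) by linarith)
        nlinarith
      · have h3 := h2 h'
        have hbc : 0 ≤ (RA - L) * (RB - L) := by
          nlinarith [mul_nonneg (show (0:ℝ) ≤ L - RA by linarith)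
            (show (0:ℝ) ≤ L - RB by linarith)]
        have := mul_nonneg (show (0:ℝ) ≤ L - RA - RB by linarith) hbc
        linarith
    · rintro (h | ⟨h1, h2⟩)
      · exact mul_neg_of_neg_of_pos (by linarith)
          (mul_pos (by linarith) (by linarith))
      · exact mul_neg_of_neg_of_pos (by linarith)
          (mul_pos_of_neg_of_neg (by linarith) (by linarith))
  · constructor
    · intro h
      by_contra hc
      push_neg at hc
      obtain ⟨h1, h2⟩ := hc
      rcases le_or_gt L RA with h' | h'
      · have hbc : 0 ≤ (RA - L) * (RB - L) :=
          mul_nonneg (by linarith) (by linarith)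
        have := mul_nonpos_of_nonpos_of_nonneg
          (show L - RA - RB ≤ 0 by linarith) hbc
        linarith
      · have h3 := h2 h'
        have hbc : 0 ≤ (RA - L) * (RB - L) := by
          nlinarith [mul_nonneg (show (0:ℝ) ≤ L - RA by linarith)
            (show (0:ℝ) ≤ L - RB by linarith)]
        have := mul_nonpos_of_nonpos_of_nonneg
          (show L - RA - RB ≤ 0 by linarith) hbc
        linarith
    · rintro (h | ⟨h1, h2⟩)
      · exact mul_pos (by linarith)
          (mul_pos_of_neg_of_neg (by linarith) (by linarith))
      · exact mul_pos_of_neg_of_neg (by linarith)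
          (mul_neg_of_neg_of_pos (by linarith) (by linarith))

private lemma sign_iff (L RA RB : ℝ) (hL : 0 < L) (hA : 0 < RA) (hB : 0 < RB) :
    ((L - RA - RB) * ((RA - L) * (RB - L)) < 0 ↔
      (L < min RA RB ∨ (max RA RB < L ∧ L < RA + RB))) ∧
    (0 < (L - RA - RB) * ((RA - L) * (RB - L)) ↔
      (RA + RB < L ∨ (min RA RB < L ∧ L < max RA RB))) := by
  rcases le_total RA RB with h | h
  · rw [min_eq_left h, max_eq_right h]
    exact sign_iff_aux L RA RB hL hA hB h
  · rw [min_eq_right h, max_eq_left h]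
    have := sign_iff_aux L RB RA hL hB hA h
    constructor
    · rw [show (L - RA - RB) * ((RA - L) * (RB - L)) =
        (L - RB - RA) * ((RB - L) * (RA - L)) by ring,
        show RA + RB = RB + RA by ring]
      exact this.1
    · rw [show (L - RA - RB) * ((RA - L) * (RB - L)) =
        (L - RB - RA) * ((RB - L) * (RA - L)) by ring,
        show RA + RB = RB + RA by ring]
      exact this.2

/-- Elliptic/hyperbolic dichotomy for the bouncing ball orbit: the Poincaré map
`P = M_A * M_B` has two non-real complex eigenvalues (elliptic case) iff
`L < min{R_A, R_B}` or `max{R_A, R_B} < L < R_A + R_B`, and it has a real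
eigenvalue of absolute value different from `1` (hyperbolic case) iff
`L > R_A + R_B` or `min{R_A, R_B} < L < max{R_A, R_B}`. -/
theorem bouncing_ball_elliptic_hyperbolic_dichotomy (L RA RB : ℝ)
    (hL : 0 < L) (hA : 0 < RA) (hB : 0 < RB) :
    let MA : Matrix (Fin 2) (Fin 2) ℝ := !![1, L; -2/RA, 1 - 2*L/RA]
    let MB : Matrix (Fin 2) (Fin 2) ℝ := !![1, L; -2/RB, 1 - 2*L/RB]
    ((∃ z : ℂ, z.im ≠ 0 ∧
        ((MA * MB).map Complex.ofReal).charpoly =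
          (X - C z) * (X - C (starRingEnd ℂ z))) ↔
      (L < min RA RB ∨ (max RA RB < L ∧ L < RA + RB))) ∧
    ((∃ x : ℝ, |x| ≠ 1 ∧ (MA * MB).charpoly.IsRoot x) ↔
      (RA + RB < L ∨ (min RA RB < L ∧ L < max RA RB))) := by
  intro MA MB
  have hA' : RA ≠ 0 := ne_of_gt hA
  have hB' : RB ≠ 0 := ne_of_gt hB
  obtain ⟨t, ht⟩ : ∃ t : ℝ, t = 2 - 4*L/RA - 4*L/RB + 4*L^2/(RA*RB) := ⟨_, rfl⟩
  have hM : MA * MB = !![1*1 + L*(-2/RB), 1*L + L*(1 - 2*L/RB);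
      (-2/RA)*1 + (1 - 2*L/RA)*(-2/RB), (-2/RA)*L + (1 - 2*L/RA)*(1 - 2*L/RB)] := by
    show (!![1, L; -2/RA, 1 - 2*L/RA] : Matrix (Fin 2) (Fin 2) ℝ) *
      !![1, L; -2/RB, 1 - 2*L/RB] = _
    rw [Matrix.mul_fin_two]
  have h1 : (1*1 + L*(-2/RB)) + ((-2/RA)*L + (1 - 2*L/RA)*(1 - 2*L/RB)) = t := by
    rw [ht]; field_simp; ring
  have h2 : (1*1 + L*(-2/RB)) * ((-2/RA)*L + (1 - 2*L/RA)*(1 - 2*L/RB)) -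
      (1*L + L*(1 - 2*L/RB)) * ((-2/RA)*1 + (1 - 2*L/RA)*(-2/RB)) = 1 := by
    field_simp; ring
  have hchar : (MA * MB).charpoly = X ^ 2 - C t * X + C 1 := by
    rw [hM, charpoly_fin_two', h1, h2]
  have hcharC : ((MA * MB).map Complex.ofReal).charpoly =
      X ^ 2 - C (t : ℂ) * X + C 1 := by
    rw [show (Complex.ofReal : ℝ → ℂ) = ⇑Complex.ofRealHom from rfl,
      Matrix.charpoly_map, hchar]
    simp
  have hdisc : t ^ 2 - 4 =
      (16*L/(RA*RB)^2) * ((L - RA - RB) * ((RA - L) * (RB - L))) := by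
    rw [ht]; field_simp; ring
  have hcoef : 0 < 16*L/(RA*RB)^2 := by positivity
  obtain ⟨hs1, hs2⟩ := sign_iff L RA RB hL hA hB
  constructor
  · constructor
    · rintro ⟨z, hzim, hz⟩
      rw [hcharC] at hz
      have hexp : (X - C z) * (X - C (starRingEnd ℂ z)) =
          X ^ 2 - C (z + starRingEnd ℂ z) * X + C (z * starRingEnd ℂ z) := by
        rw [map_add, map_mul]; ring
      rw [hexp] at hz
      have e1 := congrArg (fun p => p.coeff 1) hz
      have e0 := congrArg (fun p => p.coeff 0) hz
      simp [coeff_one] at e1 e0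
      -- e1 : (t:ℂ) = z + conj z, e0 : 1 = z * conj z (up to form)
      have hsum : z + (starRingEnd ℂ) z = (t : ℂ) := by linear_combination e1
      have htre : t = 2 * z.re := by
        rw [Complex.add_conj] at hsum
        exact_mod_cast hsum.symm
      have hns : Complex.normSq z = 1 := by
        rw [Complex.mul_conj] at e0
        exact_mod_cast e0.symm
      have hre2 : z.re ^ 2 + z.im ^ 2 = 1 := by
        have h' : z.re * z.re + z.im * z.im = 1 := hns
        linear_combination h' 
      have him2 : 0 < z.im ^ 2 := by positivity
      have htsq : t ^ 2 = 4 * z.re ^ 2 := by rw [htre]; ring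
      have ht2 : t ^ 2 < 4 := by linarith
      apply hs1.mp
      by_contra hnot
      push_neg at hnot
      have := mul_nonneg hcoef.le hnot
      linarith
    · intro hE
      have hprod := hs1.mpr hE
      have ht2 : t ^ 2 < 4 := by
        have := mul_neg_of_pos_of_neg hcoef hprod
        linarith
      have htq : (t/2)^2 = t^2/4 := by ring
      have hnn : (0:ℝ) ≤ 1 - (t/2)^2 := by linarith
      obtain ⟨s, hsdef⟩ : ∃ s : ℝ, s = Real.sqrt (1 - (t/2)^2) := ⟨_, rfl⟩
      have hs2' : s ^ 2 = 1 - (t/2)^2 := by rw [hsdef]; exact Real.sq_sqrt hnn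
      have hs0 : 0 < s := by rw [hsdef]; exact Real.sqrt_pos.mpr (by linarith)
      refine ⟨⟨t/2, s⟩, by simpa using ne_of_gt hs0, ?_⟩
      rw [hcharC]
      have hconj : starRingEnd ℂ ⟨t/2, s⟩ = ⟨t/2, -s⟩ := by
        apply Complex.ext <;> simp
      have hsum : (⟨t/2, s⟩ : ℂ) + starRingEnd ℂ ⟨t/2, s⟩ = (t : ℂ) := by
        rw [hconj]
        apply Complex.ext <;> simp <;> ring
      have hprod1 : (⟨t/2, s⟩ : ℂ) * starRingEnd ℂ ⟨t/2, s⟩ = 1 := by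
        have hn : Complex.normSq ⟨t/2, s⟩ = 1 := by
          rw [Complex.normSq_mk]; linear_combination hs2'
        rw [Complex.mul_conj, hn, Complex.ofReal_one]
      calc X ^ 2 - C (t:ℂ) * X + C 1
          = X ^ 2 - C ((⟨t/2, s⟩ : ℂ) + starRingEnd ℂ ⟨t/2, s⟩) * X +
            C ((⟨t/2, s⟩ : ℂ) * starRingEnd ℂ ⟨t/2, s⟩) := by rw [hsum, hprod1]
        _ = (X - C (⟨t/2, s⟩ : ℂ)) * (X - C (starRingEnd ℂ ⟨t/2, s⟩)) := by
            rw [map_add, map_mul]; ring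
  · constructor
    · rintro ⟨x, hx1, hroot⟩
      rw [hchar] at hroot
      have he : x ^ 2 - t * x + 1 = 0 := by
        have h' := hroot
        simp only [IsRoot, eval_add, eval_sub, eval_pow, eval_mul, eval_C, eval_X] at h'
        linarith [h']
      have hx0 : x ≠ 0 := by
        rintro rfl; norm_num at he
      have hx2p : 0 < x ^ 2 := by positivity
      have hx2 : x ^ 2 ≠ 1 := by
        intro h
        have h' : (x - 1) * (x + 1) = 0 := by linear_combination h
        rcases mul_eq_zero.mp h' with h'' | h''
        · exact hx1 (by rw [show x = 1 by linarith]; norm_num)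
        · exact hx1 (by rw [show x = -1 by linarith]; norm_num)
      have hxx : 0 < (x ^ 2 - 1) ^ 2 := by
        have : x ^ 2 - 1 ≠ 0 := sub_ne_zero.mpr hx2
        positivity
      have htx : t * x = x ^ 2 + 1 := by linarith
      have hkey : (t ^ 2 - 4) * x ^ 2 = (x ^ 2 - 1) ^ 2 := by
        linear_combination (t * x + x ^ 2 + 1) * htx
      have h4 : 4 < t ^ 2 := by
        by_contra hle
        push_neg at hle
        have : (t ^ 2 - 4) * x ^ 2 ≤ 0 :=
          mul_nonpos_of_nonpos_of_nonneg (by linarith) (le_of_lt hx2p)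
        linarith
      apply hs2.mp
      by_contra hnot
      push_neg at hnot
      have := mul_nonpos_of_nonneg_of_nonpos hcoef.le hnot
      linarith
    · intro hH
      have hprod := hs2.mpr hH
      have h4 : 4 < t ^ 2 := by
        have := mul_pos hcoef hprod
        linarith
      have hnn : (0:ℝ) ≤ t ^ 2 - 4 := by linarith
      obtain ⟨r, hrdef⟩ : ∃ r : ℝ, r = Real.sqrt (t ^ 2 - 4) := ⟨_, rfl⟩
      have hr2 : r ^ 2 = t ^ 2 - 4 := by rw [hrdef]; exact Real.sq_sqrt hnn
      have hr0 : 0 < r := by rw [hrdef]; exact Real.sqrt_pos.mpr (by linarith)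
      have hroot : ((t + r)/2) ^ 2 - t * ((t + r)/2) + 1 = 0 := by
        linear_combination hr2 / 4
      refine ⟨(t + r)/2, ?_, ?_⟩
      · intro habs
        have hx2 : ((t + r)/2) ^ 2 = 1 := by
          rw [← sq_abs, habs]; norm_num
        have htx : t * ((t + r)/2) = 2 := by linarith
        have h'' : t ^ 2 * (((t + r)/2) ^ 2) = 4 := by
          calc t ^ 2 * (((t + r)/2) ^ 2) = (t * ((t + r)/2)) ^ 2 := by ring
            _ = 2 ^ 2 := by rw [htx]
            _ = 4 := by norm_num
        rw [hx2, mul_one] at h''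
        linarith
      · rw [hchar]
        simp only [IsRoot, eval_add, eval_sub, eval_pow, eval_mul, eval_C, eval_X]
        linarith [hroot]
end

section
/- The half-power Abel transform is injective on compactly supported measures: if μ₁ and μ₂ are finite compactly supported Borel measures on ℝ such that for every E ∈ ℝ one has ∫ √(max(E - x, 0)) dμ₁(x) = ∫ √(max(E - x, 0)) dμ₂(x), then μ₁ = μ₂. -/
/-!
Write `A_μ(t) = ∫ √(t - x)₊ dμ(x)`. By Tonelli and the Beta integral
`∫ₓᴱ √(E - t) √(t - x) dt = B(3/2, 3/2) (E - x)²`, integrating `A_μ` against `√(E - t)₊`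
gives a constant multiple of `∫ (E - x)₊² dμ(x)`, which is (twice) the second iterated primitive
of the distribution function `s ↦ μ (-∞, s]`. A monotone right-continuous function is determined
by its primitive `t ↦ ∫_{(-∞, t]}`, so equality of the transforms descends from
`∫ (E - x)₊² dμ` to `∫ (t - x)₊ dμ` and then to the distribution function, which determines the
measure. Compact support keeps all these quantities finite.
-/

open MeasureTheory Set
open scoped ENNReal Nat

lemma le_of_setLIntegral_Iic_eq {f g : ℝ → ℝ≥0∞} (hf : Monotone f) (hg : Monotone g)
    (hg_cont : ∀ s, ContinuousWithinAt g (Ioi s) s)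
    (hfin : ∀ t, ∫⁻ u in Iic t, f u ≠ ∞)
    (heq : ∀ t, ∫⁻ u in Iic t, f u = ∫⁻ u in Iic t, g u) (s : ℝ) : f s ≤ g s := by
  -- `f s · (t - s) ≤ ∫_{(s, t]} f = ∫_{(s, t]} g ≤ g t · (t - s)`, then let `t ↓ s`.
  refine ge_of_tendsto (hg_cont s) (eventually_nhdsWithin_of_forall fun t (hst : s < t) => ?_)
  have hvol : volume (Ioc s t) ≠ 0 := by simpa using hst
  have split (k : ℝ → ℝ≥0∞) :
      ∫⁻ u in Iic t, k u = (∫⁻ u in Iic s, k u) + ∫⁻ u in Ioc s t, k u := by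
    rw [← lintegral_union measurableSet_Ioc (Iic_disjoint_Ioc le_rfl),
      Iic_union_Ioc_eq_Iic hst.le]
  have hlow : ∫⁻ _ in Ioc s t, f s ≤ ∫⁻ u in Ioc s t, f u :=
    setLIntegral_mono hf.measurable fun u hu => hf hu.1.le
  have hhigh : ∫⁻ u in Ioc s t, g u ≤ ∫⁻ _ in Ioc s t, g t :=
    setLIntegral_mono measurable_const fun u hu => hg hu.2
  have hmid : ∫⁻ u in Ioc s t, f u = ∫⁻ u in Ioc s t, g u := by
    have := heq t
    rw [split f, split g, ← heq s] at this
    exact (ENNReal.add_right_inj (hfin s)).1 this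
  have := hlow.trans (hmid.trans_le hhigh)
  rwa [setLIntegral_const, setLIntegral_const, ENNReal.mul_le_mul_iff_left hvol
    measure_Ioc_lt_top.ne] at this

lemma eq_of_setLIntegral_Iic_eq {f g : ℝ → ℝ≥0∞} (hf : Monotone f) (hg : Monotone g)
    (hf_cont : ∀ s, ContinuousWithinAt f (Ioi s) s)
    (hg_cont : ∀ s, ContinuousWithinAt g (Ioi s) s)
    (hfin : ∀ t, ∫⁻ u in Iic t, f u ≠ ∞)
    (heq : ∀ t, ∫⁻ u in Iic t, f u = ∫⁻ u in Iic t, g u) : f = g :=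
  funext fun s => le_antisymm (le_of_setLIntegral_Iic_eq hf hg hg_cont hfin heq s)
    (le_of_setLIntegral_Iic_eq hg hf hf_cont (fun t => heq t ▸ hfin t) (fun t => (heq t).symm) s)

lemma continuousWithinAt_measure_Iic (μ : Measure ℝ) [IsFiniteMeasure μ] (s : ℝ) :
    ContinuousWithinAt (fun t => μ (Iic t)) (Ioi s) s := by
  have hlim := tendsto_measure_biInter_gt (μ := μ) (s := Iic) (a := s)
    (fun r _ => measurableSet_Iic.nullMeasurableSet) (fun _ _ _ h => Iic_subset_Iic.2 h)
    ⟨s + 1, by linarith, measure_ne_top _ _⟩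
  have hInter : ⋂ r > s, Iic r = Iic s := by
    ext u
    simp only [mem_iInter, mem_Iic]
    exact ⟨fun h => le_of_forall_gt_imp_ge_of_dense h, fun h r hr => h.trans hr.le⟩
  rwa [hInter] at hlim

/-- `B(3/2, 3/2) = π / 8`; only its positivity matters. -/
noncomputable def abelConst : ℝ := ∫ u in (0 : ℝ)..1, √u * √(1 - u)

lemma abelConst_pos : 0 < abelConst :=
  intervalIntegral.intervalIntegral_pos_of_pos_on
    (Continuous.intervalIntegrable (by fun_prop) _ _)
    (fun _ hu => mul_pos (Real.sqrt_pos.2 hu.1) (Real.sqrt_pos.2 (sub_pos.2 hu.2))) one_pos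

lemma integral_sqrt_sub_mul_sqrt_sub {x E : ℝ} (h : x ≤ E) :
    ∫ t in x..E, √(E - t) * √(t - x) = abelConst * (E - x) ^ 2 := by
  have hsub : ∀ u : ℝ, √(E - ((E - x) * u + x)) * √((E - x) * u + x - x)
      = (E - x) * (√u * √(1 - u)) := fun u => by
    rw [show E - ((E - x) * u + x) = (E - x) * (1 - u) by ring, add_sub_cancel_right,
      Real.sqrt_mul (sub_nonneg.2 h), Real.sqrt_mul (sub_nonneg.2 h)]
    linear_combination √(1 - u) * √u * Real.mul_self_sqrt (sub_nonneg.2 h)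
  have := intervalIntegral.smul_integral_comp_mul_add
    (fun t => √(E - t) * √(t - x)) (E - x) x (a := 0) (b := 1)
  simp only [hsub, intervalIntegral.integral_const_mul, mul_zero, zero_add, mul_one,
    sub_add_cancel, smul_eq_mul] at this
  rw [← this, abelConst]
  ring

lemma setLIntegral_Ioc_ofReal_eq_intervalIntegral {f : ℝ → ℝ} {a b : ℝ} (hab : a ≤ b)
    (hf : ContinuousOn f (Icc a b)) (hf_nonneg : ∀ t ∈ Ioc a b, 0 ≤ f t) :
    ∫⁻ t in Ioc a b, ENNReal.ofReal (f t) = ENNReal.ofReal (∫ t in a..b, f t) := by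
  rw [intervalIntegral.integral_of_le hab, ofReal_integral_eq_lintegral_ofReal
    ((hf.integrableOn_Icc).mono_set Ioc_subset_Icc_self)
    (ae_restrict_of_forall_mem measurableSet_Ioc hf_nonneg)]

lemma lintegral_sqrt_mul_sqrt (x E : ℝ) :
    ∫⁻ t, ENNReal.ofReal (√(max (E - t) 0) * √(max (t - x) 0))
      = ENNReal.ofReal (abelConst * max (E - x) 0 ^ 2) := by
  have hsupp : (fun t => ENNReal.ofReal (√(max (E - t) 0) * √(max (t - x) 0))).support
      ⊆ Ioc x E := by
    refine Function.support_subset_iff'.2 fun t ht => ?_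
    rcases not_and_or.1 ht with ht | ht
    · rw [max_eq_right (sub_nonpos.2 (not_lt.1 ht))]; simp
    · rw [max_eq_right (sub_nonpos.2 (not_le.1 ht).le)]; simp
  rw [← setLIntegral_eq_of_support_subset hsupp]
  rcases le_or_gt x E with h | h
  · rw [max_eq_left (sub_nonneg.2 h), ← integral_sqrt_sub_mul_sqrt_sub h,
      ← setLIntegral_Ioc_ofReal_eq_intervalIntegral h (by fun_prop)
        (fun _ _ => by positivity)]
    refine setLIntegral_congr_fun measurableSet_Ioc fun t ht => ?_
    rw [max_eq_left (sub_nonneg.2 ht.2), max_eq_left (sub_nonneg.2 ht.1.le)]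
  · simp [Ioc_eq_empty_of_le h.le, max_eq_right (sub_nonpos.2 h.le)]

/-- For `n ≥ 1`, the `n`-th iterated primitive of `s ↦ μ (Iic s)`; at `n = 0`, `0 ^ 0 = 1`
makes it the total mass instead. -/
noncomputable def rampMoment (μ : Measure ℝ) (n : ℕ) (t : ℝ) : ℝ≥0∞ :=
  ∫⁻ x, ENNReal.ofReal (max (t - x) 0 ^ n / n !) ∂μ

lemma monotone_rampMoment (μ : Measure ℝ) (n : ℕ) : Monotone (rampMoment μ n) :=
  fun _ _ hst => lintegral_mono fun _ => ENNReal.ofReal_le_ofReal <| by gcongr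

lemma setLIntegral_Iic_ofReal_ramp_pow (x E : ℝ) (n : ℕ) :
    ∫⁻ t in Iic E, ENNReal.ofReal (max (t - x) 0 ^ (n + 1) / (n + 1)!)
      = ENNReal.ofReal (max (E - x) 0 ^ (n + 2) / (n + 2)!) := by
  have hsupp : (fun t => ENNReal.ofReal (max (t - x) 0 ^ (n + 1) / (n + 1)!)).support
      ⊆ Ioi x := Function.support_subset_iff'.2 fun t ht => by
    simp [max_eq_right (sub_nonpos.2 (not_lt.1 (mem_Ioi.not.1 ht)))]
  rw [← setLIntegral_eq_of_support_subset hsupp, Measure.restrict_restrict measurableSet_Ioi,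
    Ioi_inter_Iic]
  rcases le_or_gt x E with h | h
  · rw [max_eq_left (sub_nonneg.2 h), ← setLIntegral_congr_fun measurableSet_Ioc
      fun t ht => by rw [max_eq_left (sub_nonneg.2 ht.1.le)],
      setLIntegral_Ioc_ofReal_eq_intervalIntegral h (by fun_prop) (fun t ht => by
        have := sub_nonneg.2 ht.1.le; positivity),
      intervalIntegral.integral_div, intervalIntegral.integral_comp_sub_right (· ^ (n + 1)),
      integral_pow]
    congr 1
    push_cast [Nat.factorial_succ]
    field_simp
    ring
  · simp [Ioc_eq_empty_of_le h.le, max_eq_right (sub_nonpos.2 h.le)]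

lemma setLIntegral_Iic_indicator_Iic (x t : ℝ) :
    ∫⁻ s in Iic t, (Iic s).indicator 1 x = ENNReal.ofReal (max (t - x) 0 ^ 1 / 1!) := by
  have hind : ∀ s, (Iic s).indicator (1 : ℝ → ℝ≥0∞) x = (Ici x).indicator 1 s := fun s => by
    simp only [indicator_apply, mem_Iic, mem_Ici, Pi.one_apply]
  simp only [hind, lintegral_indicator measurableSet_Ici,
    Measure.restrict_restrict measurableSet_Ici, Ici_inter_Iic, Pi.one_apply, setLIntegral_one,
    Real.volume_Icc]
  simp

section Tonelli

variable (μ : Measure ℝ) [SFinite μ]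

lemma lintegral_sqrt_mul_lintegral_sqrt (E : ℝ) :
    ∫⁻ t, ENNReal.ofReal √(max (E - t) 0) * ∫⁻ x, ENNReal.ofReal √(max (t - x) 0) ∂μ
      = ENNReal.ofReal (2 * abelConst) * rampMoment μ 2 E := by
  have hmeas : Measurable (Function.uncurry fun t x : ℝ =>
      ENNReal.ofReal (√(max (E - t) 0) * √(max (t - x) 0))) := by fun_prop
  calc ∫⁻ t, ENNReal.ofReal √(max (E - t) 0) * ∫⁻ x, ENNReal.ofReal √(max (t - x) 0) ∂μ
      = ∫⁻ t, ∫⁻ x, ENNReal.ofReal (√(max (E - t) 0) * √(max (t - x) 0)) ∂μ := by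
        simp only [ENNReal.ofReal_mul (Real.sqrt_nonneg _),
          lintegral_const_mul' _ _ ENNReal.ofReal_ne_top]
    _ = ∫⁻ x, ENNReal.ofReal (abelConst * max (E - x) 0 ^ 2) ∂μ := by
        rw [lintegral_lintegral_swap hmeas.aemeasurable]
        simp only [lintegral_sqrt_mul_sqrt]
    _ = ENNReal.ofReal (2 * abelConst) * rampMoment μ 2 E := by
        rw [rampMoment, ← lintegral_const_mul' _ _ ENNReal.ofReal_ne_top]
        refine lintegral_congr fun x => ?_
        rw [← ENNReal.ofReal_mul (by linarith [abelConst_pos])]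
        norm_num [Nat.factorial]
        ring_nf

lemma setLIntegral_Iic_rampMoment_succ (n : ℕ) (E : ℝ) :
    ∫⁻ t in Iic E, rampMoment μ (n + 1) t = rampMoment μ (n + 2) E := by
  have hmeas : Measurable (Function.uncurry fun t x : ℝ =>
      ENNReal.ofReal (max (t - x) 0 ^ (n + 1) / (n + 1)!)) := by fun_prop
  simp only [rampMoment]
  rw [lintegral_lintegral_swap hmeas.aemeasurable]
  simp only [setLIntegral_Iic_ofReal_ramp_pow]

lemma setLIntegral_Iic_measure_Iic (t : ℝ) :
    ∫⁻ s in Iic t, μ (Iic s) = rampMoment μ 1 t := by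
  have hmeas :
      Measurable (Function.uncurry fun s x : ℝ => (Iic s).indicator (1 : ℝ → ℝ≥0∞) x) :=
    measurable_one.indicator (s := {p : ℝ × ℝ | p.2 ≤ p.1})
      (measurableSet_le measurable_snd measurable_fst)
  simp only [← lintegral_indicator_one measurableSet_Iic]
  rw [lintegral_lintegral_swap hmeas.aemeasurable]
  simp only [setLIntegral_Iic_indicator_Iic, rampMoment]

lemma rampMoment_two_eq_of_lintegral_sqrt_eq {ν : Measure ℝ} [SFinite ν]
    (h : ∀ t, ∫⁻ x, ENNReal.ofReal √(max (t - x) 0) ∂μ = ∫⁻ x, ENNReal.ofReal √(max (t - x) 0) ∂ν) :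
    rampMoment μ 2 = rampMoment ν 2 := funext fun E => by
  have hA := lintegral_sqrt_mul_lintegral_sqrt μ E
  simp only [h, lintegral_sqrt_mul_lintegral_sqrt ν E] at hA
  exact (ENNReal.mul_right_inj (by simpa using abelConst_pos) ENNReal.ofReal_ne_top).1 hA.symm

end Tonelli

lemma Continuous.integrable_of_measure_compl_eq_zero {X E : Type*} [TopologicalSpace X]
    [T2Space X] [MeasurableSpace X] [OpensMeasurableSpace X] [NormedAddCommGroup E]
    {μ : Measure X} [IsFiniteMeasureOnCompacts μ] {K : Set X} {f : X → E} (hf : Continuous f)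
    (hK : IsCompact K) (hμK : μ Kᶜ = 0) : Integrable f μ := by
  rw [← Measure.restrict_eq_self_of_ae_mem (mem_ae_iff.2 hμK)]
  exact hf.continuousOn.integrableOn_compact hK

section CompactSupport

variable {μ : Measure ℝ} [IsFiniteMeasure μ] {K : Set ℝ}

lemma rampMoment_ne_top (hK : IsCompact K) (hμK : μ Kᶜ = 0) (n : ℕ) (t : ℝ) :
    rampMoment μ n t ≠ ∞ :=
  ((Continuous.integrable_of_measure_compl_eq_zero (by fun_prop) hK hμK).lintegral_lt_top).ne

lemma continuous_rampMoment (hK : IsCompact K) (hμK : μ Kᶜ = 0) (n : ℕ) :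
    Continuous (rampMoment μ n) := by
  have hμ : μ.restrict K = μ := Measure.restrict_eq_self_of_ae_mem (mem_ae_iff.2 hμK)
  have : rampMoment μ n = fun t => ENNReal.ofReal (∫ x in K, max (t - x) 0 ^ n / n ! ∂μ) := by
    ext t
    rw [hμ, ofReal_integral_eq_lintegral_ofReal
      (Continuous.integrable_of_measure_compl_eq_zero (by fun_prop) hK hμK)
      (ae_of_all _ fun x => by positivity)]
    rfl
  rw [this]
  exact ENNReal.continuous_ofReal.comp
    (continuous_parametric_integral_of_continuous (by fun_prop) hK)

lemma rampMoment_eq_of_rampMoment_succ_eq {ν : Measure ℝ} [IsFiniteMeasure ν] {L : Set ℝ}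
    (hK : IsCompact K) (hμK : μ Kᶜ = 0) (hL : IsCompact L) (hνL : ν Lᶜ = 0) (n : ℕ)
    (h : rampMoment μ (n + 2) = rampMoment ν (n + 2)) :
    rampMoment μ (n + 1) = rampMoment ν (n + 1) :=
  eq_of_setLIntegral_Iic_eq (monotone_rampMoment μ _) (monotone_rampMoment ν _)
    (fun _ => (continuous_rampMoment hK hμK _).continuousWithinAt)
    (fun _ => (continuous_rampMoment hL hνL _).continuousWithinAt)
    (fun t => setLIntegral_Iic_rampMoment_succ μ n t ▸ rampMoment_ne_top hK hμK _ t)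
    (fun t => by rw [setLIntegral_Iic_rampMoment_succ, setLIntegral_Iic_rampMoment_succ, h])

lemma eq_of_rampMoment_one_eq {ν : Measure ℝ} [IsFiniteMeasure ν] (hK : IsCompact K)
    (hμK : μ Kᶜ = 0) (h : rampMoment μ 1 = rampMoment ν 1) : μ = ν := by
  refine Measure.ext_of_Iic μ ν (congrFun ?_)
  exact eq_of_setLIntegral_Iic_eq (fun _ _ hst => measure_mono (Iic_subset_Iic.2 hst))
    (fun _ _ hst => measure_mono (Iic_subset_Iic.2 hst))
    (continuousWithinAt_measure_Iic μ) (continuousWithinAt_measure_Iic ν)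
    (fun t => setLIntegral_Iic_measure_Iic μ t ▸ rampMoment_ne_top hK hμK 1 t)
    (fun t => by rw [setLIntegral_Iic_measure_Iic, setLIntegral_Iic_measure_Iic, h])

end CompactSupport

/-- Injectivity of the half-power Abel transform on finite compactly supported
Borel measures on `ℝ`: if `∫ √((E - x)₊) dμ₁(x) = ∫ √((E - x)₊) dμ₂(x)` for every
`E ∈ ℝ`, then `μ₁ = μ₂`. -/
theorem abel_transform_injective (μ₁ μ₂ : Measure ℝ)
    [IsFiniteMeasure μ₁] [IsFiniteMeasure μ₂]
    (hc₁ : ∃ K : Set ℝ, IsCompact K ∧ μ₁ Kᶜ = 0)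
    (hc₂ : ∃ K : Set ℝ, IsCompact K ∧ μ₂ Kᶜ = 0)
    (h : ∀ E : ℝ, ∫ x, Real.sqrt (max (E - x) 0) ∂μ₁
        = ∫ x, Real.sqrt (max (E - x) 0) ∂μ₂) :
    μ₁ = μ₂ := by
  obtain ⟨K₁, hK₁, hμ₁⟩ := hc₁
  obtain ⟨K₂, hK₂, hμ₂⟩ := hc₂
  have hsqrt (t : ℝ) : ∫⁻ x, ENNReal.ofReal √(max (t - x) 0) ∂μ₁
      = ∫⁻ x, ENNReal.ofReal √(max (t - x) 0) ∂μ₂ := by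
    have hf : Continuous fun x : ℝ => √(max (t - x) 0) := by fun_prop
    have hf_nonneg (x : ℝ) : 0 ≤ √(max (t - x) 0) := Real.sqrt_nonneg _
    rw [← ofReal_integral_eq_lintegral_ofReal (hf.integrable_of_measure_compl_eq_zero hK₁ hμ₁)
        (ae_of_all _ hf_nonneg),
      ← ofReal_integral_eq_lintegral_ofReal (hf.integrable_of_measure_compl_eq_zero hK₂ hμ₂)
        (ae_of_all _ hf_nonneg), h t]
  have h2 : rampMoment μ₁ 2 = rampMoment μ₂ 2 := rampMoment_two_eq_of_lintegral_sqrt_eq μ₁ hsqrt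
  have h1 : rampMoment μ₁ 1 = rampMoment μ₂ 1 :=
    rampMoment_eq_of_rampMoment_succ_eq hK₁ hμ₁ hK₂ hμ₂ 0 h2
  exact eq_of_rampMoment_one_eq hK₁ hμ₁ h1
end
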